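/- arXiv:1410.3335 — 3 statements merged into one kernel-verified Lean document; each statement's English description precedes it below -/
import Mathlib

section
/- Under these assumptions, F₁(U) = ∫₀^∞ (‖y(t)‖² − ‖ỹ(t)‖²) dt converges and equals tr X − tr Z. -/
open Matrix MeasureTheory
open scoped Kronecker

/-- Matrix exponential over ℝ. -/
noncomputable def mexp {k : ℕ} (M : Matrix (Fin k) (Fin k) ℝ) : Matrix (Fin k) (Fin k) ℝ :=
  NormedSpace.exp M

/-- A real square matrix is stable if every complex eigenvalue has negative real part. -/
def IsStableMat {k : ℕ} (M : Matrix (Fin k) (Fin k) ℝ) : Prop :=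
  ∀ μ ∈ spectrum ℂ (M.map (algebraMap ℝ ℂ)), μ.re < 0

/-- Frobenius norm of a real matrix. -/
noncomputable def frobNorm {m l : Type*} [Fintype m] [Fintype l] (M : Matrix m l ℝ) : ℝ :=
  Real.sqrt (∑ i, ∑ j, (M i j) ^ 2)

/-- Euclidean norm of a real vector. -/
noncomputable def euclNorm {m : Type*} [Fintype m] (v : m → ℝ) : ℝ :=
  Real.sqrt (∑ i, (v i) ^ 2)

/-!
A stable matrix `M` satisfies `exp (t • M) → 0` as `t → ∞`: every eigenvalue of `exp M` is
`exp c` for an eigenvalue `c` of `M` (a common eigenvector of the commuting `M` and `exp M`), so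
the spectral radius of `exp M` is `< 1` and Gelfand's formula makes its powers decay.
If `M W + W Mᵀ = -v vᵀ`, the function `-tr (exp (t • M) * W * exp (t • Mᵀ))` has derivative
`‖exp (t • M) v‖²` and tends to `0`, so the improper integral of `‖exp (t • M) v‖²` is `tr W`.
This gives `∫ ‖y‖² = tr X` and, since `U` is an isometry, `∫ ‖ỹ‖² = ∫ ‖exp (t • B) c₀‖² = tr Z`.
-/

open NormedSpace Filter Topology Set

section BanachAlgebra

variable {𝔸 : Type*} [NormedRing 𝔸] [NormedAlgebra ℂ 𝔸] [CompleteSpace 𝔸]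

theorem tendsto_pow_atTop_nhds_zero_of_spectralRadius_lt_one {a : 𝔸}
    (ha : spectralRadius ℂ a < 1) : Tendsto (fun n : ℕ => a ^ n) atTop (𝓝 0) := by
  obtain ⟨r, hρr, hr1⟩ := ENNReal.lt_iff_exists_nnreal_btwn.mp ha
  have hbound : ∀ᶠ n : ℕ in atTop, ‖a ^ n‖ ≤ (r : ℝ) ^ n := by
    filter_upwards [(spectrum.pow_norm_pow_one_div_tendsto_nhds_spectralRadius a)
      |>.eventually_lt_const hρr, eventually_ge_atTop 1] with n hn hn1
    rw [ENNReal.ofReal_lt_iff_lt_toReal (by positivity) ENNReal.coe_ne_top, ENNReal.coe_toReal,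
      one_div, Real.rpow_inv_lt_iff_of_pos (norm_nonneg _) r.coe_nonneg (Nat.cast_pos.mpr hn1),
      Real.rpow_natCast] at hn
    exact hn.le
  refine squeeze_zero_norm' hbound (tendsto_pow_atTop_nhds_zero_of_lt_one r.coe_nonneg ?_)
  exact_mod_cast hr1

theorem tendsto_exp_smul_atTop_nhds_zero_of_spectralRadius_lt_one {a : 𝔸}
    (ha : spectralRadius ℂ (exp a) < 1) :
    Tendsto (fun t : ℝ => exp ((t : ℂ) • a)) atTop (𝓝 0) := by
  let _ : NormedAlgebra ℚ 𝔸 := NormedAlgebra.restrictScalars ℚ ℂ 𝔸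
  have hcont : Continuous fun s : ℝ => ‖exp ((s : ℂ) • a)‖ :=
    (exp_continuous.comp (Complex.continuous_ofReal.smul continuous_const)).norm
  obtain ⟨s₀, -, hs₀⟩ := isCompact_Icc.exists_isMaxOn (nonempty_Icc.mpr zero_le_one)
    hcont.continuousOn
  have hsplit (t : ℝ) : exp ((t : ℂ) • a) = exp a ^ ⌊t⌋₊ * exp (((t - ⌊t⌋₊ : ℝ) : ℂ) • a) := by
    rw [← NormedSpace.exp_nsmul, ← Nat.cast_smul_eq_nsmul ℂ, ← NormedSpace.exp_add_of_commute
      (((Commute.refl a).smul_left _).smul_right _), ← add_smul]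
    push_cast
    ring_nf
  have hbound : ∀ᶠ t : ℝ in atTop, ‖exp ((t : ℂ) • a)‖ ≤ ‖exp a ^ ⌊t⌋₊‖ * ‖exp ((s₀ : ℂ) • a)‖ := by
    filter_upwards [eventually_ge_atTop 0] with t ht
    rw [hsplit]
    refine (norm_mul_le _ _).trans (mul_le_mul_of_nonneg_left (hs₀ ?_) (norm_nonneg _))
    exact ⟨sub_nonneg.mpr (Nat.floor_le ht), by linarith [Nat.lt_floor_add_one t]⟩
  refine squeeze_zero_norm' hbound ?_
  simpa using ((tendsto_pow_atTop_nhds_zero_of_spectralRadius_lt_one ha).norm.comp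
    tendsto_nat_floor_atTop).mul_const ‖exp ((s₀ : ℂ) • a)‖

end BanachAlgebra

theorem Matrix.sum_sq_mulVec_of_transpose_mul_self_eq_one {m r : Type*} [Fintype m] [Fintype r]
    [DecidableEq r] {U : Matrix m r ℝ} (hU : Uᵀ * U = 1) (w : r → ℝ) :
    ∑ i, (U *ᵥ w) i ^ 2 = ∑ j, w j ^ 2 := by
  have h : (U *ᵥ w) ⬝ᵥ (U *ᵥ w) = w ⬝ᵥ w := by
    rw [dotProduct_mulVec, ← mulVec_transpose, mulVec_mulVec, hU, one_mulVec]
  simpa only [dotProduct, sq] using h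

theorem Matrix.trace_mul_vecMulVec_mul_transpose {m : Type*} [Fintype m] (P : Matrix m m ℝ)
    (v : m → ℝ) :
    (P * vecMulVec v v * Pᵀ).trace = ∑ i, (P *ᵥ v) i ^ 2 := by
  rw [mul_vecMulVec, vecMulVec_mul, vecMul_transpose, trace_vecMulVec, dotProduct]
  simp only [sq]

section MatrixExp

attribute [local instance] Matrix.linftyOpNormedRing Matrix.linftyOpNormedAlgebra

namespace Matrix

variable {m : Type*} [Fintype m] [DecidableEq m]

theorem exp_mulVec_of_mulVec_eq_smul {𝕂 : Type*} [RCLike 𝕂] {N : Matrix m m 𝕂} {c : 𝕂}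
    {v : m → 𝕂} (h : N *ᵥ v = c • v) : exp N *ᵥ v = exp c • v := by
  have hpow (n : ℕ) : N ^ n *ᵥ v = c ^ n • v := by
    induction n with
    | zero => simp
    | succ n ih => rw [pow_succ', ← mulVec_mulVec, ih, mulVec_smul, h, smul_smul, ← pow_succ]
  have hN := (exp_series_hasSum_exp' (𝕂 := 𝕂) N).map (mulVec.addMonoidHomLeft v)
    (continuous_id.matrix_mulVec continuous_const)
  have hc := (exp_series_hasSum_exp' (𝕂 := 𝕂) c).smul_const v
  have hterm (n : ℕ) : ((n.factorial : 𝕂)⁻¹ • N ^ n) *ᵥ v = ((n.factorial : 𝕂)⁻¹ • c ^ n) • v := by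
    rw [smul_mulVec, hpow, smul_smul, smul_eq_mul]
  refine hN.unique ?_
  convert hc using 1
  exact funext hterm

theorem spectrum_exp_subset_image_exp (N : Matrix m m ℂ) :
    spectrum ℂ (exp N) ⊆ Complex.exp '' spectrum ℂ N := by
  intro μ hμ
  set f : Module.End ℂ (m → ℂ) := toLin' (exp N)
  set g : Module.End ℂ (m → ℂ) := toLin' N
  have hfg : Commute f g := (Commute.exp_left (Commute.refl N)).map toLinAlgEquiv'
  have hμf : f.HasEigenvalue μ := by
    rwa [Module.End.hasEigenvalue_iff_mem_spectrum, spectrum_toLin']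
  have : Nontrivial (f.eigenspace μ) := Submodule.nontrivial_iff_ne_bot.mpr hμf
  obtain ⟨c, hc⟩ :=
    Module.End.exists_eigenvalue (g.restrict (Module.End.mapsTo_genEigenspace_of_comm hfg μ 1))
  obtain ⟨w, hw⟩ := hc.exists_hasEigenvector
  have hw0 : (w : m → ℂ) ≠ 0 := by simpa using hw.2
  have hNw : N *ᵥ (w : m → ℂ) = c • (w : m → ℂ) := congrArg Subtype.val hw.apply_eq_smul
  have hexpw : exp N *ᵥ (w : m → ℂ) = μ • (w : m → ℂ) := Module.End.mem_eigenspace_iff.mp w.2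
  refine ⟨c, ?_, ?_⟩
  · rw [← spectrum_toLin', ← Module.End.hasEigenvalue_iff_mem_spectrum]
    exact Module.End.hasEigenvalue_of_hasEigenvector ⟨Module.End.mem_eigenspace_iff.mpr hNw, hw0⟩
  · rw [Complex.exp_eq_exp_ℂ]
    exact smul_left_injective ℂ hw0 ((exp_mulVec_of_mulVec_eq_smul hNw).symm.trans hexpw)

theorem spectralRadius_exp_lt_one {N : Matrix m m ℂ} (hN : ∀ μ ∈ spectrum ℂ N, μ.re < 0) :
    spectralRadius ℂ (exp N) < 1 := by
  rcases isEmpty_or_nonempty m with hm | hm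
  · simp [spectrum.of_subsingleton, spectralRadius]
  refine spectrum.spectralRadius_lt_of_forall_lt _ fun z hz => ?_
  obtain ⟨c, hc, rfl⟩ := spectrum_exp_subset_image_exp N hz
  rw [← NNReal.coe_lt_coe, coe_nnnorm, Complex.norm_exp, NNReal.coe_one, Real.exp_lt_one_iff]
  exact hN c hc

theorem hasDerivAt_trace_exp_smul_mul_mul_exp_smul_transpose (M W : Matrix m m ℝ) (t : ℝ) :
    HasDerivAt (fun s : ℝ => (exp (s • M) * W * exp (s • Mᵀ)).trace)
      (exp (t • M) * (M * W + W * Mᵀ) * exp (t • Mᵀ)).trace t := by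
  have hP := hasDerivAt_exp_smul_const' (𝕂 := ℝ) M t
  have hPt := hasDerivAt_exp_smul_const (𝕂 := ℝ) Mᵀ t
  have hcomm : M * exp (t • M) = exp (t • M) * M :=
    (((Commute.refl M).smul_right t).exp_right).eq
  have hcommt : exp (t • Mᵀ) * Mᵀ = Mᵀ * exp (t • Mᵀ) :=
    (((Commute.refl Mᵀ).smul_right t).exp_right).eq.symm
  have h := (traceLinearMap m ℝ ℝ).toContinuousLinearMap.hasFDerivAt.comp_hasDerivAt t
    ((hP.mul_const W).mul hPt)
  have hsum : M * exp (t • M) * W * exp (t • Mᵀ) + exp (t • M) * W * (exp (t • Mᵀ) * Mᵀ) =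
      exp (t • M) * (M * W + W * Mᵀ) * exp (t • Mᵀ) := by
    rw [hcomm, hcommt]
    noncomm_ring
  exact h.congr_deriv (congrArg trace hsum)

section Gramian

variable {M W : Matrix m m ℝ} {v : m → ℝ}

theorem hasDerivAt_neg_trace_of_lyapunov (hW : M * W + W * Mᵀ = -vecMulVec v v) (t : ℝ) :
    HasDerivAt (fun s : ℝ => -(exp (s • M) * W * exp (s • Mᵀ)).trace)
      (∑ i, (exp (t • M) *ᵥ v) i ^ 2) t := by
  refine (hasDerivAt_trace_exp_smul_mul_mul_exp_smul_transpose M W t).neg.congr_deriv ?_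
  rw [hW, ← transpose_smul, exp_transpose, mul_neg, neg_mul, trace_neg, neg_neg,
    trace_mul_vecMulVec_mul_transpose]

theorem tendsto_trace_exp_smul_mul_mul_exp_smul_transpose
    (hM : Tendsto (fun t : ℝ => exp (t • M)) atTop (𝓝 0)) (W : Matrix m m ℝ) :
    Tendsto (fun t : ℝ => (exp (t • M) * W * exp (t • Mᵀ)).trace) atTop (𝓝 0) := by
  have hcont : Continuous fun P : Matrix m m ℝ => (P * W * Pᵀ).trace := by fun_prop
  simpa [Function.comp_def, ← transpose_smul, exp_transpose] using (hcont.tendsto 0).comp hM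

theorem integrableOn_Ioi_sum_sq_exp_smul_mulVec
    (hM : Tendsto (fun t : ℝ => exp (t • M)) atTop (𝓝 0)) (hW : M * W + W * Mᵀ = -vecMulVec v v) :
    IntegrableOn (fun t : ℝ => ∑ i, (exp (t • M) *ᵥ v) i ^ 2) (Ioi 0) :=
  integrableOn_Ioi_deriv_of_nonneg' (fun t _ => hasDerivAt_neg_trace_of_lyapunov hW t)
    (fun _ _ => Finset.sum_nonneg fun _ _ => sq_nonneg _)
    (tendsto_trace_exp_smul_mul_mul_exp_smul_transpose hM W).neg

theorem integral_Ioi_sum_sq_exp_smul_mulVec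
    (hM : Tendsto (fun t : ℝ => exp (t • M)) atTop (𝓝 0)) (hW : M * W + W * Mᵀ = -vecMulVec v v) :
    ∫ t in Ioi (0 : ℝ), ∑ i, (exp (t • M) *ᵥ v) i ^ 2 = W.trace := by
  rw [integral_Ioi_of_hasDerivAt_of_tendsto' (fun t _ => hasDerivAt_neg_trace_of_lyapunov hW t)
    (integrableOn_Ioi_sum_sq_exp_smul_mulVec hM hW)
    (tendsto_trace_exp_smul_mul_mul_exp_smul_transpose hM W).neg]
  simp

end Gramian

end Matrix

theorem IsStableMat.tendsto_exp_smul {k : ℕ} {M : Matrix (Fin k) (Fin k) ℝ} (hM : IsStableMat M) :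
    Tendsto (fun t : ℝ => exp (t • M)) atTop (𝓝 0) := by
  set N := M.map (algebraMap ℝ ℂ)
  have hre (t : ℝ) : exp (t • M) = (exp ((t : ℂ) • N)).map Complex.re := by
    have hsmul : (algebraMap ℝ ℂ).mapMatrix (t • M) = (t : ℂ) • N := by ext; simp [N]
    have hmap := NormedSpace.map_exp (algebraMap ℝ ℂ).mapMatrix
      (continuous_id.matrix_map Complex.continuous_ofReal) (t • M)
    rw [hsmul] at hmap
    calc exp (t • M) = ((algebraMap ℝ ℂ).mapMatrix (exp (t • M))).map Complex.re := by ext; simp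
      _ = _ := congrArg (Matrix.map · Complex.re) hmap
  have hcont : Continuous fun P : Matrix (Fin k) (Fin k) ℂ => P.map Complex.re :=
    continuous_id.matrix_map Complex.continuous_re
  have hlim := (hcont.tendsto 0).comp <|
    tendsto_exp_smul_atTop_nhds_zero_of_spectralRadius_lt_one (Matrix.spectralRadius_exp_lt_one hM)
  rw [Matrix.map_zero _ Complex.zero_re] at hlim
  exact hlim.congr fun t => (hre t).symm

end MatrixExp

theorem functional_F1_eq_trace_X_sub_trace_Z {n r : ℕ}
    (A X : Matrix (Fin n) (Fin n) ℝ) (y₀ : Fin n → ℝ)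
    (hA : IsStableMat A)
    (hX : A * X + X * Aᵀ = -vecMulVec y₀ y₀)
    (U : Matrix (Fin n) (Fin r) ℝ) (hU : Uᵀ * U = 1)
    (hB : IsStableMat (Uᵀ * A * U))
    (Z : Matrix (Fin r) (Fin r) ℝ)
    (hZ : (Uᵀ * A * U) * Z + Z * (Uᵀ * A * U)ᵀ = -vecMulVec (Uᵀ *ᵥ y₀) (Uᵀ *ᵥ y₀)) :
    IntegrableOn
      (fun t : ℝ => (∑ i, (mexp (t • A) *ᵥ y₀) i ^ 2) -
        ∑ i, (U *ᵥ (mexp (t • (Uᵀ * A * U)) *ᵥ (Uᵀ *ᵥ y₀))) i ^ 2) (Set.Ioi 0) ∧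
      ∫ t in Set.Ioi (0 : ℝ),
        ((∑ i, (mexp (t • A) *ᵥ y₀) i ^ 2) -
          ∑ i, (U *ᵥ (mexp (t • (Uᵀ * A * U)) *ᵥ (Uᵀ *ᵥ y₀))) i ^ 2)
        = X.trace - Z.trace := by
  have hy := Matrix.integrableOn_Ioi_sum_sq_exp_smul_mulVec hA.tendsto_exp_smul hX
  have hc := Matrix.integrableOn_Ioi_sum_sq_exp_smul_mulVec hB.tendsto_exp_smul hZ
  simp only [mexp, Matrix.sum_sq_mulVec_of_transpose_mul_self_eq_one hU]
  refine ⟨hy.sub hc, ?_⟩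
  rw [integral_sub hy hc, Matrix.integral_Ioi_sum_sq_exp_smul_mulVec hA.tendsto_exp_smul hX,
    Matrix.integral_Ioi_sum_sq_exp_smul_mulVec hB.tendsto_exp_smul hZ]
end

section
/- Under these assumptions, the integral ∫₀^∞ ‖y(t) − UUᵀy(t)‖² dt converges and equals tr((I − UUᵀ) X (I − UUᵀ)) = tr X − tr(UᵀXU). -/
open Matrix MeasureTheory
open scoped Kronecker

/-!
Write `Q = 1 - U Uᵀ` and `P(t) = e^{tA} X e^{tAᵀ}`. The Lyapunov equation gives
`P'(t) = e^{tA} (A X + X Aᵀ) e^{tAᵀ} = -y(t) y(t)ᵀ`, so `‖Q y(t)‖² = -(d/dt) tr (Q P(t) Qᵀ)`.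
Stability forces `e^{tA} → 0`: on the generalized eigenspace of an eigenvalue `μ`,
`e^{tA}` acts as `e^{tμ}` times a polynomial in `t`. Hence the integral telescopes to
`tr (Q X Qᵀ)`, and since `Q` is an orthogonal projection this is `tr X - tr (Uᵀ X U)`.
-/

open Filter Topology NormedSpace Finset
open scoped Nat

theorem tendsto_ofReal_pow_mul_cexp_of_re_neg (m : ℕ) {μ : ℂ} (hμ : μ.re < 0) :
    Tendsto (fun t : ℝ => (t : ℂ) ^ m * Complex.exp (t * μ)) atTop (𝓝 0) := by
  rw [tendsto_zero_iff_norm_tendsto_zero]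
  refine (tendsto_rpow_mul_exp_neg_mul_atTop_nhds_zero m (-μ.re) (by linarith)).congr' ?_
  filter_upwards [eventually_ge_atTop 0] with t ht
  simp [Complex.norm_exp, abs_of_nonneg ht, mul_comm]

namespace Matrix

variable {ι κ : Type*} [Fintype ι] [DecidableEq ι] [Fintype κ]

open scoped Matrix.Norms.Operator in
theorem exp_smul_mulVec_eq_sum_of_pow_mulVec_eq_zero
    {N : Matrix ι ι ℂ} {w : ι → ℂ} {K : ℕ} (hK : (N ^ K) *ᵥ w = 0) (t : ℂ) :
    exp (t • N) *ᵥ w = ∑ m ∈ range K, ((m ! : ℂ)⁻¹ * t ^ m) • (N ^ m *ᵥ w) := by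
  have hsum : HasSum (fun m => ((m ! : ℂ)⁻¹ * t ^ m) • (N ^ m *ᵥ w)) (exp (t • N) *ᵥ w) := by
    convert (exp_series_hasSum_exp' (𝕂 := ℂ) (t • N)).map (mulVec.addMonoidHomLeft w)
      (continuous_id.matrix_mulVec continuous_const) using 1
    · ext1 m
      simp only [Function.comp_apply, mulVec.addMonoidHomLeft, AddMonoidHom.coe_mk, ZeroHom.coe_mk]
      rw [smul_pow, smul_smul, smul_mulVec]
    · rfl
  refine hsum.tsum_eq.symm.trans (tsum_eq_sum fun m hm => ?_)
  obtain ⟨j, rfl⟩ := Nat.exists_eq_add_of_le' (not_lt.mp (mem_range.not.mp hm))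
  rw [pow_add N, ← mulVec_mulVec, hK, mulVec_zero, smul_zero]

theorem exp_algebraMap {𝕂 : Type*} [RCLike 𝕂] (z : 𝕂) :
    exp (algebraMap 𝕂 (Matrix ι ι 𝕂) z) = algebraMap 𝕂 (Matrix ι ι 𝕂) (exp z) := by
  simp [algebraMap_eq_diagonal, exp_diagonal, Pi.exp_def]

theorem tendsto_exp_smul_mulVec_of_mem_maxGenEigenspace {M : Matrix ι ι ℂ} {μ : ℂ}
    (hμ : μ.re < 0) {w : ι → ℂ} (hw : w ∈ Module.End.maxGenEigenspace (toLin' M) μ) :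
    Tendsto (fun t : ℝ => exp ((t : ℂ) • M) *ᵥ w) atTop (𝓝 0) := by
  set N := M - μ • 1
  obtain ⟨K, hK⟩ := (Module.End.mem_maxGenEigenspace _ _ _).mp hw
  have hNK : N ^ K *ᵥ w = 0 := by
    rwa [← toLin'_apply, toLin'_pow, map_sub, map_smul, toLin'_one]
  have hexp (t : ℝ) : exp ((t : ℂ) • M) *ᵥ w
      = ∑ m ∈ range K, ((m ! : ℂ)⁻¹ * ((t : ℂ) ^ m * Complex.exp (t * μ))) • (N ^ m *ᵥ w) := by
    have hsplit : (t : ℂ) • M = algebraMap ℂ _ (t * μ) + (t : ℂ) • N := by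
      rw [Algebra.algebraMap_eq_smul_one, smul_sub, smul_smul]
      abel
    rw [hsplit, Matrix.exp_add_of_commute _ _ (Algebra.commute_algebraMap_left _ _),
      exp_algebraMap, ← Complex.exp_eq_exp_ℂ,
      ← Algebra.smul_def, smul_mulVec, exp_smul_mulVec_eq_sum_of_pow_mulVec_eq_zero hNK, smul_sum]
    refine sum_congr rfl fun m _ => ?_
    rw [smul_smul]
    congr 1
    ring
  have hterm (m : ℕ) (_ : m ∈ range K) : Tendsto
      (fun t : ℝ => ((m ! : ℂ)⁻¹ * ((t : ℂ) ^ m * Complex.exp (t * μ))) • (N ^ m *ᵥ w))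
      atTop (𝓝 0) := by
    simpa using ((tendsto_ofReal_pow_mul_cexp_of_re_neg m hμ).const_mul _).smul_const (N ^ m *ᵥ w)
  have hsum := tendsto_finsetSum _ hterm
  rw [sum_const_zero] at hsum
  exact hsum.congr fun t => (hexp t).symm

theorem tendsto_exp_smul_of_forall_spectrum_re_neg {M : Matrix ι ι ℂ}
    (hM : ∀ μ ∈ spectrum ℂ M, μ.re < 0) :
    Tendsto (fun t : ℝ => exp ((t : ℂ) • M)) atTop (𝓝 0) := by
  have hvec (v : ι → ℂ) : Tendsto (fun t : ℝ => exp ((t : ℂ) • M) *ᵥ v) atTop (𝓝 0) := by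
    have hv : v ∈ ⨆ μ, Module.End.maxGenEigenspace (toLin' M) μ := by
      rw [Module.End.iSup_maxGenEigenspace_eq_top]
      trivial
    refine Submodule.iSup_induction _
      (motive := fun v => Tendsto (fun t : ℝ => exp ((t : ℂ) • M) *ᵥ v) atTop (𝓝 0)) hv
      (fun μ w hw => ?_) (by simp)
      fun v w hv hw => by simpa [mulVec_add] using hv.add hw
    by_cases hbot : Module.End.maxGenEigenspace (toLin' M) μ = ⊥
    · rw [hbot, Submodule.mem_bot] at hw
      simp [hw]
    · refine tendsto_exp_smul_mulVec_of_mem_maxGenEigenspace (hM μ ?_) hw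
      rw [← spectrum_toLin']
      exact ((Module.End.hasUnifEigenvalue_iff_hasUnifEigenvalue_one (by simp)).mp
        hbot).mem_spectrum
  refine tendsto_pi_nhds.mpr fun i => tendsto_pi_nhds.mpr fun j => ?_
  simpa [mulVec_single_one] using tendsto_pi_nhds.mp (hvec (Pi.single j 1)) i

open scoped Matrix.Norms.Operator in
theorem exp_map_ofReal (A : Matrix ι ι ℝ) :
    exp (A.map ((↑) : ℝ → ℂ)) = (exp A).map (↑) :=
  (map_exp (Complex.ofRealHom.mapMatrix : Matrix ι ι ℝ →+* Matrix ι ι ℂ)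
    (continuous_id.matrix_map Complex.continuous_ofReal) A).symm

theorem _root_.IsStableMat.tendsto_mexp_smul {k : ℕ} {A : Matrix (Fin k) (Fin k) ℝ}
    (hA : IsStableMat A) : Tendsto (fun t : ℝ => mexp (t • A)) atTop (𝓝 0) := by
  have hre (t : ℝ) :
      mexp (t • A) = (exp ((t : ℂ) • A.map ((↑) : ℝ → ℂ))).map Complex.re := by
    have hsmul : (t : ℂ) • A.map ((↑) : ℝ → ℂ) = (t • A).map (↑) := by ext; simp
    rw [hsmul, exp_map_ofReal, Matrix.map_map]
    exact (Matrix.map_id _).symm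
  simpa [hre, Function.comp_def] using
    ((continuous_id.matrix_map Complex.continuous_re).tendsto 0).comp
      (tendsto_exp_smul_of_forall_spectrum_re_neg hA)

open scoped Matrix.Norms.Operator in
theorem hasDerivAt_exp_smul_mul_mul_exp_smul_transpose (A X : Matrix ι ι ℝ) (t : ℝ) :
    HasDerivAt (fun s : ℝ => exp (s • A) * X * (exp (s • A))ᵀ)
      (exp (t • A) * (A * X + X * Aᵀ) * (exp (t • A))ᵀ) t := by
  have htranspose (s : ℝ) : (exp (s • A))ᵀ = exp (s • Aᵀ) := by
    rw [← transpose_smul, exp_transpose]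
  have hvalue : exp (t • A) * (A * X + X * Aᵀ) * exp (t • Aᵀ)
      = exp (t • A) * A * X * exp (t • Aᵀ) + exp (t • A) * X * (Aᵀ * exp (t • Aᵀ)) := by
    noncomm_ring
  simp only [htranspose, hvalue]
  exact ((hasDerivAt_exp_smul_const A t).mul_const X).mul (hasDerivAt_exp_smul_const' Aᵀ t)

open scoped Matrix.Norms.Operator in
theorem hasDerivAt_neg_trace_conj_exp_smul {A X : Matrix ι ι ℝ} {y₀ : ι → ℝ}
    (hX : A * X + X * Aᵀ = -vecMulVec y₀ y₀) (Q : Matrix κ ι ℝ) (t : ℝ) :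
    HasDerivAt (fun s : ℝ => -(Q * (exp (s • A) * X * (exp (s • A))ᵀ) * Qᵀ).trace)
      (∑ i, ((Q *ᵥ (exp (t • A) *ᵥ y₀)) i) ^ 2) t := by
  let L : Matrix ι ι ℝ →ₗ[ℝ] ℝ :=
    -(traceLinearMap κ ℝ ℝ ∘ₗ mulRightLinearMap κ ℝ Qᵀ ∘ₗ mulLeftLinearMap ι ℝ Q)
  have hvalue : L (exp (t • A) * (A * X + X * Aᵀ) * (exp (t • A))ᵀ)
      = ∑ i, ((Q *ᵥ (exp (t • A) *ᵥ y₀)) i) ^ 2 := by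
    simp [L, hX, mul_vecMulVec, vecMulVec_mul, vecMul_transpose, dotProduct, sq]
  rw [← hvalue]
  exact L.toContinuousLinearMap.hasFDerivAt.comp_hasDerivAt t
    (hasDerivAt_exp_smul_mul_mul_exp_smul_transpose A X t)

theorem integral_Ioi_sum_sq_mulVec_exp_smul_mulVec {A X : Matrix ι ι ℝ} {y₀ : ι → ℝ}
    (hA : Tendsto (fun t : ℝ => exp (t • A)) atTop (𝓝 0))
    (hX : A * X + X * Aᵀ = -vecMulVec y₀ y₀) (Q : Matrix κ ι ℝ) :
    IntegrableOn (fun t : ℝ => ∑ i, ((Q *ᵥ (exp (t • A) *ᵥ y₀)) i) ^ 2) (Set.Ioi 0) ∧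
      ∫ t in Set.Ioi (0 : ℝ), ∑ i, ((Q *ᵥ (exp (t • A) *ᵥ y₀)) i) ^ 2 = (Q * X * Qᵀ).trace := by
  have hderiv (t : ℝ) (_ : t ∈ Set.Ici 0) := hasDerivAt_neg_trace_conj_exp_smul hX Q t
  have hnonneg (t : ℝ) (_ : t ∈ Set.Ioi 0) : 0 ≤ ∑ i, ((Q *ᵥ (exp (t • A) *ᵥ y₀)) i) ^ 2 :=
    sum_nonneg fun i _ => sq_nonneg _
  have hlim : Tendsto (fun s : ℝ => -(Q * (exp (s • A) * X * (exp (s • A))ᵀ) * Qᵀ).trace)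
      atTop (𝓝 0) := by
    have hcont : Continuous fun E : Matrix ι ι ℝ => -(Q * (E * X * Eᵀ) * Qᵀ).trace := by
      fun_prop
    simpa [Function.comp_def] using (hcont.tendsto 0).comp hA
  refine ⟨integrableOn_Ioi_deriv_of_nonneg' hderiv hnonneg hlim, ?_⟩
  rw [integral_Ioi_of_hasDerivAt_of_nonneg' hderiv hnonneg hlim]
  simp

theorem trace_one_sub_mul_transpose_mul_mul_one_sub {R m r : Type*} [CommRing R] [Fintype m]
    [DecidableEq m] [Fintype r] [DecidableEq r] {U : Matrix m r R} (hU : Uᵀ * U = 1)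
    (X : Matrix m m R) :
    ((1 - U * Uᵀ) * X * (1 - U * Uᵀ)).trace = X.trace - (Uᵀ * X * U).trace := by
  have hP : U * Uᵀ * (U * Uᵀ) = U * Uᵀ := by
    rw [Matrix.mul_assoc, ← Matrix.mul_assoc Uᵀ, hU, Matrix.one_mul]
  have hQ : (1 - U * Uᵀ) * (1 - U * Uᵀ) = 1 - U * Uᵀ := by
    rw [mul_sub, mul_one, sub_mul, one_mul, hP, sub_self, sub_zero]
  calc ((1 - U * Uᵀ) * X * (1 - U * Uᵀ)).trace
      = ((1 - U * Uᵀ) * (1 - U * Uᵀ) * X).trace := trace_mul_cycle _ _ _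
    _ = X.trace - (U * Uᵀ * X).trace := by rw [hQ, sub_mul, one_mul, trace_sub]
    _ = X.trace - (Uᵀ * X * U).trace := by rw [trace_mul_cycle Uᵀ X U]

end Matrix

theorem integral_orthproj_error_eq_trace {n r : ℕ}
    (A X : Matrix (Fin n) (Fin n) ℝ) (y₀ : Fin n → ℝ)
    (hA : IsStableMat A)
    (hX : A * X + X * Aᵀ = -vecMulVec y₀ y₀)
    (U : Matrix (Fin n) (Fin r) ℝ) (hU : Uᵀ * U = 1) :
    IntegrableOn
      (fun t : ℝ => ∑ i, ((mexp (t • A) *ᵥ y₀) i -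
        (U *ᵥ (Uᵀ *ᵥ (mexp (t • A) *ᵥ y₀))) i) ^ 2) (Set.Ioi 0) ∧
    (∫ t in Set.Ioi (0 : ℝ),
        ∑ i, ((mexp (t • A) *ᵥ y₀) i -
          (U *ᵥ (Uᵀ *ᵥ (mexp (t • A) *ᵥ y₀))) i) ^ 2)
      = ((1 - U * Uᵀ) * X * (1 - U * Uᵀ)).trace ∧
    ((1 - U * Uᵀ) * X * (1 - U * Uᵀ)).trace = X.trace - (Uᵀ * X * U).trace := by
  have hQ : (1 - U * Uᵀ)ᵀ = 1 - U * Uᵀ := by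
    rw [transpose_sub, transpose_one, transpose_mul, transpose_transpose]
  have hproj (v : Fin n → ℝ) : (1 - U * Uᵀ) *ᵥ v = v - U *ᵥ (Uᵀ *ᵥ v) := by
    rw [sub_mulVec, one_mulVec, mulVec_mulVec]
  obtain ⟨hintegrable, hintegral⟩ :=
    integral_Ioi_sum_sq_mulVec_exp_smul_mulVec hA.tendsto_mexp_smul hX (1 - U * Uᵀ)
  simp only [hproj, hQ, Pi.sub_apply] at hintegrable hintegral
  exact ⟨hintegrable, hintegral, trace_one_sub_mul_transpose_mul_mul_one_sub hU X⟩
end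

section
/- Assume y₀ lies in the column space of U, i.e., y₀ = UUᵀy₀, and that AU − UB = wqᵀ for a vector w ∈ ℝⁿ and a unit vector q ∈ ℝʳ. Then the Lyapunov residual satisfies R₁(U) = ‖A(UZUᵀ) + (UZUᵀ)Aᵀ + y₀y₀ᵀ‖_F = √2 · ‖w‖ · ‖Zᵀq‖, where ‖w‖ and ‖Zᵀq‖ are Euclidean norms of vectors. -/
open Matrix MeasureTheory
open scoped Kronecker

/-! Write `B = UᵀAU` and `c = Uᵀy₀`. Since `y₀ = Uc` and `AU = UB + wqᵀ`, the Lyapunov equation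
for `Z` cancels the projected part `U(BZ + ZBᵀ + ccᵀ)Uᵀ` of the residual, leaving
`w(UZᵀq)ᵀ + (UZq)wᵀ`. Stability of `B` makes `X ↦ BX + XBᵀ` injective (the spectra of `B` and
`-Bᵀ` are disjoint), so `Z` is symmetric and the residual is `wxᵀ + xwᵀ` with `x = UZq`.
Multiplying `AU - UB = wqᵀ` by `Uᵀ` gives `Uᵀw = 0`, so `w ⟂ x` and
`‖wxᵀ + xwᵀ‖_F² = 2‖w‖²‖x‖²`; finally `‖x‖ = ‖Zq‖` because `U` is an isometry. -/

namespace Matrix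

open Polynomial

variable {m n : Type*} [Fintype m] [DecidableEq m] [Fintype n] [DecidableEq n]

theorem aeval_mul_eq_mul_aeval {R : Type*} [CommSemiring R] {C : Matrix m m R}
    {D : Matrix n n R} {W : Matrix m n R} (h : C * W = W * D) (p : R[X]) :
    aeval C p * W = W * aeval D p := by
  have hpow (k : ℕ) : C ^ k * W = W * D ^ k := by
    induction k with
    | zero => simp
    | succ k ih => rw [pow_succ, pow_succ, Matrix.mul_assoc, h, ← Matrix.mul_assoc, ih,
        Matrix.mul_assoc]
  induction p using Polynomial.induction_on' with
  | add p q hp hq => simp only [map_add, Matrix.add_mul, Matrix.mul_add, hp, hq]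
  | monomial k a => simp only [aeval_monomial, ← Algebra.smul_def, Matrix.smul_mul,
      Matrix.mul_smul, hpow]

variable {K : Type*} [Field K]

theorem spectrum_transpose (M : Matrix n n K) : spectrum K Mᵀ = spectrum K M := by
  ext μ
  rw [mem_spectrum_iff_isRoot_charpoly, mem_spectrum_iff_isRoot_charpoly, charpoly_transpose]

theorem eq_zero_of_mul_eq_mul_of_disjoint_spectrum [IsAlgClosed K]
    {C : Matrix m m K} {D : Matrix n n K} {W : Matrix m n K}
    (hCD : Disjoint (spectrum K C) (spectrum K D)) (h : C * W = W * D) : W = 0 := by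
  cases isEmpty_or_nonempty m
  · exact Subsingleton.elim _ _
  -- Cayley–Hamilton kills `χ_C(C)`, while `χ_C(D)` is invertible: its spectrum is `χ_C(σ D)`.
  have hunit : IsUnit (aeval D C.charpoly) := by
    rw [← spectrum.zero_notMem_iff K, spectrum.map_polynomial_aeval_of_degree_pos D _
      (by rw [charpoly_degree_eq_dim]; exact_mod_cast Fintype.card_pos)]
    rintro ⟨μ, hμD, hμC⟩
    exact hCD.notMem_of_mem_right hμD (mem_spectrum_iff_isRoot_charpoly.mpr hμC)
  have hzero := aeval_mul_eq_mul_aeval h C.charpoly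
  rw [aeval_self_charpoly, Matrix.zero_mul] at hzero
  calc W = W * aeval D C.charpoly * (↑hunit.unit⁻¹ : Matrix n n K) := by
        rw [Matrix.mul_assoc, IsUnit.mul_val_inv, Matrix.mul_one]
    _ = 0 := by rw [← hzero, Matrix.zero_mul]

end Matrix

theorem IsStableMat.eq_zero_of_mul_add_mul_transpose_eq_zero {k : ℕ}
    {B W : Matrix (Fin k) (Fin k) ℝ} (hB : IsStableMat B) (h : B * W + W * Bᵀ = 0) : W = 0 := by
  set f := algebraMap ℝ ℂ
  have hdisj : Disjoint (spectrum ℂ (B.map f)) (spectrum ℂ (-(B.map f)ᵀ)) := by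
    rw [← spectrum.neg_eq, Matrix.spectrum_transpose, Set.disjoint_left]
    intro μ hμ hμ'
    have hneg := hB (-μ) (Set.mem_neg.mp hμ')
    have hpos := hB μ hμ
    rw [Complex.neg_re] at hneg
    linarith
  have hmap : B.map f * W.map f = W.map f * -(B.map f)ᵀ := by
    rw [Matrix.mul_neg, ← Matrix.transpose_map, ← Matrix.map_mul, ← Matrix.map_mul,
      eq_neg_of_add_eq_zero_left h, Matrix.map_neg _ (map_neg f)]
  have hWc := Matrix.eq_zero_of_mul_eq_mul_of_disjoint_spectrum hdisj hmap
  exact Matrix.map_injective (RingHom.injective f) (by simp [hWc])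

theorem IsStableMat.isSymm_of_mul_add_mul_transpose_eq {k : ℕ}
    {B Z C : Matrix (Fin k) (Fin k) ℝ} (hB : IsStableMat B) (hZ : B * Z + Z * Bᵀ = C)
    (hC : C.IsSymm) : Z.IsSymm := by
  have hZt : B * Zᵀ + Zᵀ * Bᵀ = C := by
    rw [← hC.eq, ← hZ, Matrix.transpose_add, Matrix.transpose_mul, Matrix.transpose_mul,
      Matrix.transpose_transpose, add_comm]
  have hskew := hB.eq_zero_of_mul_add_mul_transpose_eq_zero (W := Zᵀ - Z) (by
    rw [Matrix.mul_sub, Matrix.sub_mul, sub_add_sub_comm, hZt, hZ, sub_self])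
  exact sub_eq_zero.mp hskew

namespace Matrix

variable {α : Type*} [CommRing α] {m k : Type*} [Fintype m] [Fintype k]

theorem mul_conj_eq_of_mul_eq_add_vecMulVec {A : Matrix m m α} {U : Matrix m k α}
    {B : Matrix k k α} {w : m → α} {q : k → α} (hAU : A * U = U * B + vecMulVec w q)
    (Z : Matrix k k α) :
    A * (U * Z * Uᵀ) = U * (B * Z) * Uᵀ + vecMulVec w (U *ᵥ (Zᵀ *ᵥ q)) := by
  rw [← Matrix.mul_assoc, ← Matrix.mul_assoc, hAU, Matrix.add_mul, Matrix.add_mul,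
    vecMulVec_mul, vecMulVec_mul, ← mulVec_transpose, ← mulVec_transpose, transpose_transpose,
    Matrix.mul_assoc U B]

theorem lyapunov_residual_eq_of_mul_eq_add_vecMulVec {A : Matrix m m α} {U : Matrix m k α}
    {B Z : Matrix k k α} {c : k → α} {w : m → α} {q : k → α}
    (hAU : A * U = U * B + vecMulVec w q) (hZ : B * Z + Z * Bᵀ = -vecMulVec c c) :
    A * (U * Z * Uᵀ) + U * Z * Uᵀ * Aᵀ + vecMulVec (U *ᵥ c) (U *ᵥ c) =
      vecMulVec w (U *ᵥ (Zᵀ *ᵥ q)) + vecMulVec (U *ᵥ (Z *ᵥ q)) w := by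
  have hright : U * Z * Uᵀ * Aᵀ = (A * (U * Zᵀ * Uᵀ))ᵀ := by
    simp only [transpose_mul, transpose_transpose, Matrix.mul_assoc]
  have hc : vecMulVec (U *ᵥ c) (U *ᵥ c) = U * vecMulVec c c * Uᵀ := by
    rw [mul_vecMulVec, vecMulVec_mul, ← mulVec_transpose, transpose_transpose]
  have htr : (U * (B * Zᵀ) * Uᵀ)ᵀ = U * (Z * Bᵀ) * Uᵀ := by
    simp only [transpose_mul, transpose_transpose, Matrix.mul_assoc]
  have hconj : U * (B * Z) * Uᵀ + U * (Z * Bᵀ) * Uᵀ + U * vecMulVec c c * Uᵀ = 0 := by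
    rw [← Matrix.add_mul, ← Matrix.mul_add, ← Matrix.add_mul, ← Matrix.mul_add, hZ,
      neg_add_cancel, Matrix.mul_zero, Matrix.zero_mul]
  rw [hright, mul_conj_eq_of_mul_eq_add_vecMulVec hAU, mul_conj_eq_of_mul_eq_add_vecMulVec hAU,
    transpose_add, transpose_vecMulVec, transpose_transpose, htr, hc, ← sub_eq_zero, ← hconj]
  abel

variable [DecidableEq k]

theorem transpose_mulVec_eq_zero_of_sub_eq_vecMulVec [NoZeroDivisors α] {A : Matrix m m α}
    {U : Matrix m k α} {w : m → α} {q : k → α} (hU : Uᵀ * U = 1)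
    (h : A * U - U * (Uᵀ * A * U) = vecMulVec w q) (hq : q ≠ 0) : Uᵀ *ᵥ w = 0 := by
  have hzero : vecMulVec (Uᵀ *ᵥ w) q = 0 := by
    rw [← mul_vecMulVec, ← h, Matrix.mul_sub, ← Matrix.mul_assoc, ← Matrix.mul_assoc,
      ← Matrix.mul_assoc, hU, Matrix.one_mul, Matrix.mul_assoc, sub_self]
  exact (vecMulVec_eq_zero.mp hzero).resolve_right hq

end Matrix

theorem euclNorm_eq_sqrt_dotProduct {m : Type*} [Fintype m] (v : m → ℝ) :
    euclNorm v = √(v ⬝ᵥ v) := by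
  simp only [euclNorm, dotProduct, sq]

theorem euclNorm_mulVec_of_transpose_mul_self_eq_one {m k : Type*} [Fintype m] [Fintype k]
    [DecidableEq k] {U : Matrix m k ℝ} (hU : Uᵀ * U = 1) (v : k → ℝ) :
    euclNorm (U *ᵥ v) = euclNorm v := by
  rw [euclNorm_eq_sqrt_dotProduct, euclNorm_eq_sqrt_dotProduct, dotProduct_mulVec,
    ← mulVec_transpose, mulVec_mulVec, hU, one_mulVec, dotProduct_comm]

theorem frobNorm_vecMulVec_add_vecMulVec_of_dotProduct_eq_zero {m : Type*} [Fintype m]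
    {w x : m → ℝ} (h : w ⬝ᵥ x = 0) :
    frobNorm (vecMulVec w x + vecMulVec x w) = √2 * euclNorm w * euclNorm x := by
  have hsum : ∑ i, ∑ j, (vecMulVec w x + vecMulVec x w) i j ^ 2 =
      2 * ((w ⬝ᵥ w) * (x ⬝ᵥ x)) + 2 * (w ⬝ᵥ x) ^ 2 := by
    have hterm (i j : m) : (vecMulVec w x + vecMulVec x w) i j ^ 2 =
        w i * w i * (x j * x j) + x i * x i * (w j * w j) + 2 * (w i * x i) * (w j * x j) := by
      simp only [Matrix.add_apply, vecMulVec_apply]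
      ring
    simp only [hterm, Finset.sum_add_distrib, ← Finset.mul_sum, ← Finset.sum_mul, dotProduct]
    ring
  have hw : 0 ≤ w ⬝ᵥ w := dotProduct_self_star_nonneg w
  rw [frobNorm, hsum, h, euclNorm_eq_sqrt_dotProduct, euclNorm_eq_sqrt_dotProduct, mul_assoc,
    ← Real.sqrt_mul hw, ← Real.sqrt_mul zero_le_two]
  norm_num

theorem lyapunov_residual_rank_one_formula_general {n r : ℕ}
    (A : Matrix (Fin n) (Fin n) ℝ) (y₀ : Fin n → ℝ)
    (U : Matrix (Fin n) (Fin r) ℝ) (hU : Uᵀ * U = 1)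
    (hB : IsStableMat (Uᵀ * A * U))
    (hy : y₀ = U *ᵥ (Uᵀ *ᵥ y₀))
    (Z : Matrix (Fin r) (Fin r) ℝ)
    (hZ : (Uᵀ * A * U) * Z + Z * (Uᵀ * A * U)ᵀ = -vecMulVec (Uᵀ *ᵥ y₀) (Uᵀ *ᵥ y₀))
    (w : Fin n → ℝ) (q : Fin r → ℝ) (hq : euclNorm q = 1)
    (hwq : A * U - U * (Uᵀ * A * U) = vecMulVec w q) :
    frobNorm (A * (U * Z * Uᵀ) + (U * Z * Uᵀ) * Aᵀ + vecMulVec y₀ y₀)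
      = Real.sqrt 2 * euclNorm w * euclNorm (Zᵀ *ᵥ q) := by
  have hAU : A * U = U * (Uᵀ * A * U) + vecMulVec w q := sub_eq_iff_eq_add'.mp hwq
  have hZsymm : Z.IsSymm :=
    hB.isSymm_of_mul_add_mul_transpose_eq hZ (IsSymm.neg (transpose_vecMulVec _ _))
  have hq0 : q ≠ 0 := by
    rintro rfl
    simp [euclNorm] at hq
  have hUw : Uᵀ *ᵥ w = 0 := transpose_mulVec_eq_zero_of_sub_eq_vecMulVec hU hwq hq0
  have horth : w ⬝ᵥ U *ᵥ (Z *ᵥ q) = 0 := by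
    rw [dotProduct_mulVec, ← mulVec_transpose, hUw, zero_dotProduct]
  rw [hy, lyapunov_residual_eq_of_mul_eq_add_vecMulVec hAU hZ, hZsymm.eq,
    frobNorm_vecMulVec_add_vecMulVec_of_dotProduct_eq_zero horth,
    euclNorm_mulVec_of_transpose_mul_self_eq_one hU]

theorem lyapunov_residual_rank_one_formula {n r : ℕ}
    (A : Matrix (Fin n) (Fin n) ℝ) (y₀ : Fin n → ℝ)
    (hA : IsStableMat A)
    (U : Matrix (Fin n) (Fin r) ℝ) (hU : Uᵀ * U = 1)
    (hB : IsStableMat (Uᵀ * A * U))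
    (hy : y₀ = U *ᵥ (Uᵀ *ᵥ y₀))
    (Z : Matrix (Fin r) (Fin r) ℝ)
    (hZ : (Uᵀ * A * U) * Z + Z * (Uᵀ * A * U)ᵀ = -vecMulVec (Uᵀ *ᵥ y₀) (Uᵀ *ᵥ y₀))
    (w : Fin n → ℝ) (q : Fin r → ℝ) (hq : euclNorm q = 1)
    (hwq : A * U - U * (Uᵀ * A * U) = vecMulVec w q) :
    frobNorm (A * (U * Z * Uᵀ) + (U * Z * Uᵀ) * Aᵀ + vecMulVec y₀ y₀)
      = Real.sqrt 2 * euclNorm w * euclNorm (Zᵀ *ᵥ q) :=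
  lyapunov_residual_rank_one_formula_general A y₀ U hU hB hy Z hZ w q hq hwq
end
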